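/- arXiv:1706.01260 — 2 statements merged into one kernel-verified Lean document; each statement's English description precedes it below -/
import Mathlib

section
/- Let A be an m×n complex matrix with orthonormal columns (A*A = I_n). Then for each pair (r_1, r_2) ∈ [m]^2, the marginal ∑_{r_3,…,r_n} (1/n!)|Per A_{(r_1,…,r_n)}|^2 equals ((n−2)!/n!) · ∑_{c} |Per A^c_{r_1,r_2}|^2, where the sum is over all 2-element subsets c of [n] and A^c_{r_1,r_2} is the 2×2 matrix with rows r_1, r_2 and columns c of A. -/
open Matrix

/-- The permanent of a square complex matrix. -/
noncomputable def perm {n : ℕ} (M : Matrix (Fin n) (Fin n) ℂ) : ℂ :=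
  ∑ σ : Equiv.Perm (Fin n), ∏ i, M i (σ i)

/-!
Expanding `Per A_{(r₁, r₂, t)}` along its first two rows, `∑_t |Per|²` becomes a double sum over
pairs of permutations `σ, τ`, and orthonormality of the columns of `A` kills every term except
those where `σ` and `τ` agree on the last `n` rows, i.e. `τ = σ` or `τ = σ * swap 0 1`. What is
left depends only on the ordered pair `(σ 0, σ 1)`, which is attained by `n!` permutations;
grouping `(x, y)` with `(y, x)` gives `n! ∑_{x < y} |A r₁ x A r₂ y + A r₁ y A r₂ x|²`, and the
summand is the permanent of the `2 × 2` submatrix on rows `r₁, r₂` and columns `x, y`.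
-/

open Finset Equiv Equiv.Perm

theorem Equiv.Perm.eq_one_or_eq_swap_of_forall_ne_ne {α : Type*} [DecidableEq α] {ρ : Perm α}
    {a b : α} (h : ∀ z, z ≠ a → z ≠ b → ρ z = z) : ρ = 1 ∨ ρ = swap a b := by
  have hpair : ∀ x, x = a ∨ x = b → ρ x = a ∨ ρ x = b := fun x hx => by
    by_contra! hne
    have := ρ.injective (h _ hne.1 hne.2)
    rcases hx with rfl | rfl <;> simp_all
  have hb : b ≠ a → (ρ b = a ∨ ρ b = b) ∧ ρ b ≠ ρ a := fun hba =>
    ⟨hpair b (.inr rfl), ρ.injective.ne hba⟩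
  rcases hpair a (.inl rfl) with ha | ha
  · left
    ext z
    by_cases hza : z = a
    · simp [hza, ha]
    by_cases hzb : z = b
    · subst hzb
      have := hb hza
      simp_all
    · simp [h z hza hzb]
  · right
    ext z
    by_cases hza : z = a
    · simp [hza, ha]
    by_cases hzb : z = b
    · subst hzb
      have := hb hza
      simp_all
    · simp [h z hza hzb, swap_apply_of_ne_of_ne hza hzb]

theorem Equiv.Perm.apply_succ_succ_eq_iff {n : ℕ} {σ τ : Perm (Fin (n + 2))} :
    (fun k : Fin n => σ k.succ.succ) = (fun k => τ k.succ.succ) ↔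
      τ = σ ∨ τ = σ * swap 0 1 := by
  constructor
  · intro h
    have hfix : ∀ z, z ≠ 0 → z ≠ 1 → (σ⁻¹ * τ) z = z := by
      simp only [Fin.forall_fin_succ (n := n + 1), Fin.forall_fin_succ (n := n)]
      refine ⟨by simp, by simp, fun k _ _ => ?_⟩
      rw [Perm.mul_apply, ← congrFun h k, inv_eq_iff_eq]
    rcases eq_one_or_eq_swap_of_forall_ne_ne hfix with hρ | hρ
    · left; rw [inv_mul_eq_one] at hρ; exact hρ.symm
    · right; rw [inv_mul_eq_iff_eq_mul] at hρ; exact hρ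
  · rintro (rfl | rfl)
    · rfl
    · ext k
      simp [swap_apply_of_ne_of_ne (Fin.succ_ne_zero _) (Fin.succ_succ_ne_one k)]

theorem Equiv.Perm.sum_ite_apply_succ_succ_eq {M : Type*} [AddCommMonoid M] {n : ℕ}
    (σ : Perm (Fin (n + 2))) (c : Perm (Fin (n + 2)) → M) :
    ∑ τ, (if (fun k : Fin n => σ k.succ.succ) = (fun k => τ k.succ.succ) then c τ else 0) =
      c σ + c (σ * swap 0 1) := by
  have hne : σ ≠ σ * swap 0 1 := by simp [swap_eq_one_iff]
  simp_rw [apply_succ_succ_eq_iff, ← sum_filter, filter_or, filter_eq', mem_univ, if_true]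
  rw [sum_union (by simp [hne]), sum_singleton, sum_singleton]

theorem Equiv.Perm.sum_apply_zero {M : Type*} [AddCommMonoid M] {n : ℕ} (g : Fin (n + 1) → M) :
    ∑ σ : Perm (Fin (n + 1)), g (σ 0) = n.factorial • ∑ x, g x := by
  rw [← decomposeFin.symm.sum_comp, Fintype.sum_prod_type, sum_comm]
  simp [decomposeFin_symm_apply_zero, sum_const, smul_sum, Fintype.card_perm]

theorem Equiv.Perm.sum_apply_zero_apply_one {M : Type*} [AddCommGroup M] {n : ℕ}
    (f : Fin (n + 2) → Fin (n + 2) → M) :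
    ∑ σ : Perm (Fin (n + 2)), f (σ 0) (σ 1) = n.factorial • ∑ x, ∑ y ∈ univ.erase x, f x y := by
  rw [← decomposeFin.symm.sum_comp, Fintype.sum_prod_type, smul_sum]
  refine sum_congr rfl fun x _ => ?_
  simp only [decomposeFin_symm_apply_zero, decomposeFin_symm_apply_one]
  rw [sum_apply_zero (fun q => f x (swap 0 x q.succ)), sum_erase_eq_sub (mem_univ x),
    ← Equiv.sum_comp (swap 0 x) (f x), Fin.sum_univ_succ (fun y => f x (swap 0 x y))]
  simp

theorem Finset.coe_orderEmbOfFin_pair {α : Type*} [LinearOrder α] {x y : α} (hxy : x < y)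
    (h : ({x, y} : Finset α).card = 2) :
    ⇑(({x, y} : Finset α).orderEmbOfFin h) = ![x, y] := by
  refine (orderEmbOfFin_unique h (fun i => ?_) ?_).symm
  · fin_cases i <;> simp
  · simpa [Fin.strictMono_iff_lt_succ] using hxy

section LinearOrder

variable {α M : Type*} [Fintype α] [LinearOrder α] [AddCommMonoid M]

theorem Finset.sum_sum_erase_eq_sum_sum_ite_lt (F : α → α → M) :
    ∑ x, ∑ y ∈ univ.erase x, F x y = ∑ x, ∑ y, if x < y then F x y + F y x else 0 := by
  have hsplit : ∀ x y, (if y ≠ x then F x y else 0) =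
      (if x < y then F x y else 0) + if y < x then F x y else 0 := fun x y => by
    split_ifs <;> simp_all <;> order
  simp_rw [← filter_ne' univ, sum_filter, hsplit, sum_add_distrib]
  rw [sum_comm (f := fun x y => if y < x then F x y else 0), ← sum_add_distrib]
  simp_rw [← sum_add_distrib, ← ite_add_zero]

theorem Finset.sum_attach_powersetCard_two (G : α → α → M) :
    ∑ c ∈ (powersetCard 2 (univ : Finset α)).attach,
        G (c.1.orderEmbOfFin (mem_powersetCard.mp c.2).2 0)
          (c.1.orderEmbOfFin (mem_powersetCard.mp c.2).2 1) =
      ∑ x, ∑ y, if x < y then G x y else 0 := by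
  rw [← Fintype.sum_prod_type', ← sum_filter]
  refine sum_bij'
    (fun c _ => (c.1.orderEmbOfFin (mem_powersetCard.mp c.2).2 0,
      c.1.orderEmbOfFin (mem_powersetCard.mp c.2).2 1))
    (fun p hp => ⟨{p.1, p.2}, mem_powersetCard.mpr
      ⟨subset_univ _, card_pair (mem_filter.mp hp).2.ne⟩⟩)
    (fun c _ => mem_filter.mpr ⟨mem_univ _, (c.1.orderEmbOfFin _).lt_iff_lt.mpr (by decide)⟩)
    (fun _ _ => mem_attach _ _) (fun c _ => ?_) (fun p hp => ?_) (fun _ _ => rfl)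
  · set e := c.1.orderEmbOfFin (mem_powersetCard.mp c.2).2
    have hsub : {e 0, e 1} ⊆ c.1 := by simp [insert_subset_iff, e, orderEmbOfFin_mem]
    have hcard : #c.1 ≤ #{e 0, e 1} := by
      rw [card_pair (e.injective.ne (by decide)), (mem_powersetCard.mp c.2).2]
    exact Subtype.ext (eq_of_subset_of_card_le hsub hcard)
  · simp [coe_orderEmbOfFin_pair (mem_filter.mp hp).2]

end LinearOrder

section Orthonormal

variable {R ι κ : Type*} [CommSemiring R] [StarRing R] [Fintype ι] [DecidableEq κ]
  {A : Matrix ι κ R}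

theorem sum_mul_star_eq_of_conjTranspose_mul_self_eq_one (hA : Aᴴ * A = 1) (x y : κ) :
    ∑ r, A r x * star (A r y) = if x = y then 1 else 0 := by
  have := congrFun (congrFun hA y) x
  rw [Matrix.mul_apply, Matrix.one_apply] at this
  simpa only [conjTranspose_apply, mul_comm (star _), @eq_comm _ y x] using this

theorem sum_prod_mul_star_eq_of_conjTranspose_mul_self_eq_one (hA : Aᴴ * A = 1)
    {ν : Type*} [Fintype ν] [DecidableEq ν] (f g : ν → κ) :
    ∑ t : ν → ι, ∏ k, A (t k) (f k) * star (A (t k) (g k)) = if f = g then 1 else 0 := by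
  rw [← (Fintype.prod_sum fun k r => A r (f k) * star (A r (g k)))]
  simp_rw [sum_mul_star_eq_of_conjTranspose_mul_self_eq_one hA, prod_boole, mem_univ,
    true_implies, funext_iff]

theorem sum_mul_star_sum_eq_of_conjTranspose_mul_self_eq_one (hA : Aᴴ * A = 1)
    {ν π : Type*} [Fintype ν] [DecidableEq ν] [Fintype π] (w : π → R) (g : π → ν → κ) :
    ∑ t : ν → ι, (∑ p, w p * ∏ k, A (t k) (g p k)) * star (∑ p, w p * ∏ k, A (t k) (g p k)) =
      ∑ p, ∑ q, if g p = g q then w p * star (w q) else 0 := by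
  simp_rw [star_sum, sum_mul_sum]
  rw [sum_comm]
  refine sum_congr rfl fun p _ => ?_
  rw [sum_comm]
  refine sum_congr rfl fun q _ => ?_
  calc _ = w p * star (w q) * ∑ t : ν → ι, ∏ k, A (t k) (g p k) * star (A (t k) (g q k)) := by
        rw [mul_sum]
        refine sum_congr rfl fun t _ => ?_
        rw [star_mul', star_prod, prod_mul_distrib]
        ring
    _ = _ := by rw [sum_prod_mul_star_eq_of_conjTranspose_mul_self_eq_one hA, mul_boole]

end Orthonormal

theorem perm_fin_two (M : Matrix (Fin 2) (Fin 2) ℂ) : perm M = M 0 0 * M 1 1 + M 0 1 * M 1 0 := by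
  rw [perm, ← decomposeFin.symm.sum_comp, Fintype.sum_prod_type]
  simp [Fin.prod_univ_two]

theorem perm_of_cons_cons {ι : Type*} {n : ℕ} (A : Matrix ι (Fin (n + 2)) ℂ) (r₁ r₂ : ι)
    (t : Fin n → ι) :
    perm (Matrix.of fun i j => A ((Fin.cons r₁ (Fin.cons r₂ t) : Fin (n + 2) → ι) i) j) =
      ∑ σ : Perm (Fin (n + 2)), A r₁ (σ 0) * A r₂ (σ 1) * ∏ k, A (t k) (σ k.succ.succ) := by
  simp [perm, Fin.prod_univ_succ, mul_assoc]

theorem sum_perm_cons_cons_mul_star_eq {ι : Type*} [Fintype ι] {n : ℕ}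
    {A : Matrix ι (Fin (n + 2)) ℂ} (hA : Aᴴ * A = 1) (r₁ r₂ : ι) :
    ∑ t : Fin n → ι,
        perm (Matrix.of fun i j => A ((Fin.cons r₁ (Fin.cons r₂ t) : Fin (n + 2) → ι) i) j) *
          star (perm (Matrix.of fun i j =>
            A ((Fin.cons r₁ (Fin.cons r₂ t) : Fin (n + 2) → ι) i) j)) =
      n.factorial • ∑ c ∈ (powersetCard 2 (univ : Finset (Fin (n + 2)))).attach,
        perm (Matrix.of fun (i : Fin 2) (j : Fin 2) =>
          A (![r₁, r₂] i) (c.1.orderEmbOfFin (mem_powersetCard.mp c.2).2 j)) *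
        star (perm (Matrix.of fun (i : Fin 2) (j : Fin 2) =>
          A (![r₁, r₂] i) (c.1.orderEmbOfFin (mem_powersetCard.mp c.2).2 j))) := by
  set B : Fin (n + 2) → Fin (n + 2) → ℂ := fun x y => A r₁ x * A r₂ y
  calc _ = ∑ σ : Perm (Fin (n + 2)), ∑ τ : Perm (Fin (n + 2)),
        if (fun k : Fin n => σ k.succ.succ) = (fun k => τ k.succ.succ) then
          B (σ 0) (σ 1) * star (B (τ 0) (τ 1)) else 0 := by
        simp_rw [perm_of_cons_cons]
        exact sum_mul_star_sum_eq_of_conjTranspose_mul_self_eq_one hA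
          (fun σ : Perm (Fin (n + 2)) => B (σ 0) (σ 1)) (fun σ (k : Fin n) => σ k.succ.succ)
    _ = ∑ σ : Perm (Fin (n + 2)), (B (σ 0) (σ 1) * star (B (σ 0) (σ 1)) +
          B (σ 0) (σ 1) * star (B (σ 1) (σ 0))) := by
        simp_rw [sum_ite_apply_succ_succ_eq, Perm.mul_apply, swap_apply_left, swap_apply_right]
    _ = n.factorial • ∑ x, ∑ y ∈ univ.erase x,
          (B x y * star (B x y) + B x y * star (B y x)) :=
        sum_apply_zero_apply_one fun x y => B x y * star (B x y) + B x y * star (B y x)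
    _ = n.factorial • ∑ x, ∑ y, if x < y then (B x y + B y x) * star (B x y + B y x) else 0 := by
        rw [sum_sum_erase_eq_sum_sum_ite_lt]
        congr 1
        refine sum_congr rfl fun x _ => sum_congr rfl fun y _ => ?_
        rw [star_add]
        split_ifs <;> ring
    _ = _ := by
        rw [← sum_attach_powersetCard_two]
        simp only [perm_fin_two, of_apply, cons_val_zero, cons_val_one, B]

theorem sum_norm_perm_cons_cons_sq_eq {ι : Type*} [Fintype ι] {n : ℕ}
    {A : Matrix ι (Fin (n + 2)) ℂ} (hA : Aᴴ * A = 1) (r₁ r₂ : ι) :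
    ∑ t : Fin n → ι,
        ‖perm (Matrix.of fun i j => A ((Fin.cons r₁ (Fin.cons r₂ t) : Fin (n + 2) → ι) i) j)‖ ^ 2 =
      n.factorial * ∑ c ∈ (powersetCard 2 (univ : Finset (Fin (n + 2)))).attach,
        ‖perm (Matrix.of fun (i : Fin 2) (j : Fin 2) =>
          A (![r₁, r₂] i) (c.1.orderEmbOfFin (mem_powersetCard.mp c.2).2 j))‖ ^ 2 := by
  have key := sum_perm_cons_cons_mul_star_eq hA r₁ r₂
  simp_rw [← starRingEnd_apply, Complex.mul_conj', nsmul_eq_mul] at key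
  exact_mod_cast key

/-- Two-coordinate marginal of the Boson Sampling pmf: for an `m × (n+2)` matrix
`A` with orthonormal columns and fixed `r₁, r₂`, summing over the remaining
coordinates gives `(n!/(n+2)!) ∑_{c ∈ C₂} |Per A^c_{r₁,r₂}|²`, the sum being
over all 2-element subsets `c` of the columns. -/
theorem bosonSampling_second_marginal {m n : ℕ}
    (A : Matrix (Fin m) (Fin (n + 2)) ℂ) (hA : Aᴴ * A = 1) (r₁ r₂ : Fin m) :
    ∑ t : Fin n → Fin m,
      (1 / ((n + 2).factorial : ℝ)) *
        ‖perm (Matrix.of fun i j =>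
          A ((Fin.cons r₁ (Fin.cons r₂ t) : Fin (n + 2) → Fin m) i) j)‖ ^ 2
    = ((n.factorial : ℝ) / ((n + 2).factorial : ℝ)) *
      ∑ c ∈ (Finset.powersetCard 2 (Finset.univ : Finset (Fin (n + 2)))).attach,
        ‖perm (Matrix.of fun (i : Fin 2) (j : Fin 2) =>
          A (![r₁, r₂] i) (c.1.orderEmbOfFin ((Finset.mem_powersetCard.mp c.2).2) j))‖ ^ 2 := by
  rw [← mul_sum, sum_norm_perm_cons_cons_sq_eq hA]
  ring
end

section
/- Let A be an m×n complex matrix with orthonormal columns and let s_i be the multiplicity of value i in a sample z from the Boson Sampling distribution q(z) = (1/μ(z))|Per A_z|^2 on non-decreasing arrays z ∈ [m]^n. Then the expectation of s_i equals ∑_{k=1}^{n} |a_{i,k}|^2. -/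
open Matrix

/-!
Write `#{t | r t = i} = ∑ₜ [r t = i]` and expand
`|Per A_r|² = ∑_{σ,τ} ∏ₛ A_{r s, σ s} conj A_{r s, τ s}`. For fixed `t`, `σ`, `τ` the sum
over `r` with `r t = i` factorises over `s`; by orthonormality of the columns each factor with
`s ≠ t` is `[σ s = τ s]`, which forces `σ = τ`. What remains is
`∑ₜ ∑_σ |A_{i, σ t}|² = n! ∑ₖ |A_{i k}|²`.
-/

open Finset ComplexConjugate

theorem Fintype.sum_ite_apply_eq_prod {ι κ R : Type*} [Fintype ι] [DecidableEq ι] [Fintype κ]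
    [DecidableEq κ] [CommSemiring R] (g : ι → κ → R) (t : ι) (i : κ) :
    ∑ r : ι → κ, (if r t = i then ∏ s, g s (r s) else 0)
      = g t i * ∏ s ∈ univ.erase t, ∑ j, g s j := by
  set f : ι → κ → R := fun s j => if s = t ∧ j ≠ i then 0 else g s j
  have hf : ∀ r : ι → κ, ∏ s, f s (r s) = if r t = i then ∏ s, g s (r s) else 0 := by
    intro r
    split_ifs with hr
    · exact Finset.prod_congr rfl fun s _ => if_neg fun h : s = t ∧ r s ≠ i => h.2 (h.1 ▸ hr)
    · exact prod_eq_zero (mem_univ t) (if_pos ⟨rfl, hr⟩)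
  have hft : ∑ j, f t j = g t i := by simp [f]
  have hfs : ∏ s ∈ univ.erase t, ∑ j, f s j = ∏ s ∈ univ.erase t, ∑ j, g s j :=
    Finset.prod_congr rfl fun s hs => by simp [f, ne_of_mem_erase hs]
  rw [← hft, ← hfs, mul_prod_erase univ (fun s => ∑ j, f s j) (mem_univ t), Fintype.prod_sum]
  exact Finset.sum_congr rfl fun r _ => (hf r).symm

theorem Equiv.Perm.eq_of_apply_eq_of_ne {α : Type*} [Finite α] {σ τ : Equiv.Perm α} (t : α)
    (h : ∀ s, s ≠ t → σ s = τ s) : σ = τ := by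
  refine Equiv.ext fun s => ?_
  rcases eq_or_ne s t with rfl | hs
  · obtain ⟨u, hu⟩ := σ.surjective (τ s)
    rcases eq_or_ne u s with rfl | hus
    · exact hu
    · exact absurd (τ.injective ((h u hus).symm.trans hu)) hus
  · exact h s hs

theorem perm_mul_conj {n : ℕ} (M : Matrix (Fin n) (Fin n) ℂ) :
    perm M * conj (perm M) = ∑ σ : Equiv.Perm (Fin n), ∑ τ : Equiv.Perm (Fin n),
      ∏ s, M s (σ s) * conj (M s (τ s)) := by
  simp_rw [perm, map_sum, map_prod, sum_mul_sum, prod_mul_distrib]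

theorem Matrix.sum_mul_conj_of_conjTranspose_mul_self {m n : Type*} [Fintype m] [DecidableEq n]
    {A : Matrix m n ℂ} (hA : Aᴴ * A = 1) (a b : n) :
    ∑ j, A j a * conj (A j b) = if a = b then 1 else 0 := by
  have h := congr_fun (congr_fun hA b) a
  simp only [mul_apply, conjTranspose_apply, one_apply, RCLike.star_def] at h
  simp_rw [mul_comm (A _ a), h, eq_comm]

theorem sum_ite_apply_eq_perm_mul_conj {m n : ℕ} {A : Matrix (Fin m) (Fin n) ℂ}
    (hA : Aᴴ * A = 1) (i : Fin m) (t : Fin n) :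
    ∑ r : Fin n → Fin m, (if r t = i then
        perm (Matrix.of fun s j => A (r s) j) * conj (perm (Matrix.of fun s j => A (r s) j))
      else 0)
      = ∑ σ : Equiv.Perm (Fin n), A i (σ t) * conj (A i (σ t)) := by
  have hστ : ∀ σ τ : Equiv.Perm (Fin n),
      ∑ r : Fin n → Fin m, (if r t = i then ∏ s, A (r s) (σ s) * conj (A (r s) (τ s)) else 0)
        = if σ = τ then A i (σ t) * conj (A i (τ t)) else 0 := by
    intro σ τ
    simp_rw [Fintype.sum_ite_apply_eq_prod (fun s j => A j (σ s) * conj (A j (τ s))),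
      sum_mul_conj_of_conjTranspose_mul_self hA, prod_boole]
    have hagree : (∀ s ∈ univ.erase t, σ s = τ s) ↔ σ = τ :=
      ⟨fun h => Equiv.Perm.eq_of_apply_eq_of_ne t fun s hs => h s (mem_erase.2 ⟨hs, mem_univ s⟩),
        fun h _ _ => h ▸ rfl⟩
    simp only [hagree, mul_boole]
  calc _ = ∑ σ : Equiv.Perm (Fin n), ∑ τ : Equiv.Perm (Fin n), ∑ r : Fin n → Fin m,
          (if r t = i then ∏ s, A (r s) (σ s) * conj (A (r s) (τ s)) else 0) := by
        simp only [perm_mul_conj, of_apply, ite_sum_zero]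
        rw [sum_comm]
        exact sum_congr rfl fun σ _ => sum_comm
    _ = _ := by simp_rw [hστ, sum_ite_eq, if_pos (mem_univ _)]

theorem sum_card_fiber_mul_perm_mul_conj {m n : ℕ} {A : Matrix (Fin m) (Fin n) ℂ}
    (hA : Aᴴ * A = 1) (i : Fin m) :
    ∑ r : Fin n → Fin m, ((univ.filter fun t => r t = i).card : ℂ) *
        (perm (Matrix.of fun s j => A (r s) j) * conj (perm (Matrix.of fun s j => A (r s) j)))
      = n.factorial * ∑ k, A i k * conj (A i k) := by
  simp_rw [card_filter, Nat.cast_sum, Nat.cast_ite, Nat.cast_one, Nat.cast_zero, sum_mul,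
    boole_mul]
  rw [sum_comm]
  simp_rw [sum_ite_apply_eq_perm_mul_conj hA]
  rw [sum_comm]
  simp_rw [fun σ : Equiv.Perm (Fin n) => Equiv.sum_comp σ fun k => A i k * conj (A i k)]
  rw [sum_const, card_univ, Fintype.card_perm, Fintype.card_fin, nsmul_eq_mul]

/-- Expected multiplicity of the value `i` in a Boson Sampling sample:
`E(s_i) = ∑_k |a_{i,k}|²`.  By the expanded-space representation,
`E(s_i) = ∑_{r ∈ [m]^n} #{t : r_t = i} · (1/n!)|Per A_r|²`. -/
theorem expected_multiplicity {m n : ℕ} (A : Matrix (Fin m) (Fin n) ℂ)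
    (hA : Aᴴ * A = 1) (i : Fin m) :
    ∑ r : Fin n → Fin m,
      ((Finset.univ.filter (fun t => r t = i)).card : ℝ) *
        ((1 / (n.factorial : ℝ)) *
          ‖perm (Matrix.of fun s j => A (r s) j)‖ ^ 2)
    = ∑ k : Fin n, ‖A i k‖ ^ 2 := by
  have hfac : (n.factorial : ℂ) ≠ 0 := Nat.cast_ne_zero.mpr n.factorial_ne_zero
  apply Complex.ofReal_injective
  push_cast
  simp_rw [← Complex.mul_conj', mul_left_comm _ (1 / (n.factorial : ℂ)), ← mul_sum,
    sum_card_fiber_mul_perm_mul_conj hA, ← mul_assoc, one_div_mul_cancel hfac, one_mul]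
end
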